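/- arXiv:1306.1788 — 2 statements merged into one kernel-verified Lean document; each statement's English description precedes it below -/
import Mathlib

section
/- Let V, U be finite sets, W = {W_t : t ∈ T}, W' = {W'_s : s ∈ S} partitions of V with |T|=|S|= j ≥ 2, σ : T → S a bijection, f : U × V → ℕ, and ε_t(u) = Σ_{w ∈ W_t} f(u,w) − Σ_{w' ∈ W'_{σ(t)}} f(u,w'). Suppose that for each u ∈ U the row (ε_t(u))_{t∈T} either is identically 0 or takes the value 1 exactly once, the value −1 exactly once, and is 0 elsewhere; suppose moreover that for every t ∈ T there exists u with ε_t(u) = 1 and u' with ε_t(u') = −1. View the relation 'ε_t(u)=1, ε_{t'}(u) = −1 for some u' as a directed edge from t to t' in a graph on T; assume this graph is strongly connected. Then for any fixed t₀ ∈ T, the family of vectors {ε_t : t ∈ T, t ≠ t₀} ⊂ ℤ^U is linearly independent over ℤ. -/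
/-!
Extend a relation `∑_{t ≠ t₀} c_t ε_t = 0` by `c_{t₀} = 0`. Evaluating it at a coordinate `u`
whose row has its `1` at `a` and its `-1` at `b` gives `c_a = c_b`, so `c` is constant along the
edges of the transition graph, hence constant by strong connectivity, hence zero.
-/

theorem Relation.ReflTransGen.apply_eq {α β : Type*} {r : α → α → Prop} {f : α → β}
    (hf : ∀ a b, r a b → f a = f b) {a b : α} (h : Relation.ReflTransGen r a b) : f a = f b := by
  simpa [Relation.reflTransGen_eq_self] using h.lift f hf

theorem linearIndependent_subtype_ne_of_forall_eq {ι R M : Type*} [Fintype ι] [Ring R]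
    [AddCommGroup M] [Module R M] (v : ι → M) (i₀ : ι)
    (h : ∀ c : ι → R, ∑ i, c i • v i = 0 → ∀ i, c i = c i₀) :
    LinearIndependent R (fun i : {i // i ≠ i₀} => v i) := by
  classical
  rw [Fintype.linearIndependent_iff]
  intro g hg i
  let c : ι → R := fun i => if hi : i = i₀ then 0 else g ⟨i, hi⟩
  have hc : ∑ i, c i • v i = 0 := by
    rw [Fintype.sum_eq_add_sum_subtype_ne _ i₀, ← hg]
    simp only [c, dif_pos, zero_smul, zero_add]
    exact Fintype.sum_congr _ _ fun i => by rw [dif_neg i.2]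
  simpa [c, i.2] using h c hc i

theorem Fintype.sum_mul_eq_sub_of_eq_one_of_eq_neg_one {T R : Type*} [Fintype T] [Ring R]
    {x : T → R} {a b : T} (hab : a ≠ b) (ha : x a = 1) (hb : x b = -1)
    (hzero : ∀ t, t ≠ a → t ≠ b → x t = 0) (c : T → R) :
    ∑ t, c t * x t = c a - c b := by
  rw [Fintype.sum_eq_add a b hab fun t ht => by rw [hzero t ht.1 ht.2, mul_zero], ha, hb]
  noncomm_ring

theorem eq_zero_of_ne_of_existsUnique_eq_one_of_existsUnique_eq_neg_one {T : Type*} {x : T → ℤ}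
    (h1 : ∃! t, x t = 1) (h2 : ∃! t, x t = -1) (hval : ∀ t, x t = 0 ∨ x t = 1 ∨ x t = -1)
    {a b : T} (ha : x a = 1) (hb : x b = -1) : ∀ t, t ≠ a → t ≠ b → x t = 0 := by
  intro t hta htb
  rcases hval t with h | h | h
  · exact h
  · exact absurd (h1.unique h ha) hta
  · exact absurd (h2.unique h hb) htb

theorem coeff_eq_of_sum_smul_eq_zero_of_eq_one_of_eq_neg_one {T U : Type*} [Fintype T]
    {ε : T → U → ℤ} {u : U}
    (hrow : (∀ t, ε t u = 0) ∨
      ((∃! t, ε t u = 1) ∧ (∃! t, ε t u = -1) ∧ ∀ t, ε t u = 0 ∨ ε t u = 1 ∨ ε t u = -1))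
    {c : T → ℤ} (hc : ∑ t, c t • ε t = 0) {a b : T} (ha : ε a u = 1) (hb : ε b u = -1) :
    c a = c b := by
  obtain h0 | ⟨h1, h2, hval⟩ := hrow
  · simp [h0 a] at ha
  have hab : a ≠ b := by rintro rfl; simp [ha] at hb
  have hzero := eq_zero_of_ne_of_existsUnique_eq_one_of_existsUnique_eq_neg_one h1 h2 hval ha hb
  have hcu : ∑ t, c t * ε t u = 0 := by simpa [Finset.sum_apply] using congr_fun hc u
  rw [Fintype.sum_mul_eq_sub_of_eq_one_of_eq_neg_one hab ha hb hzero] at hcu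
  exact sub_eq_zero.mp hcu

theorem imbalance_vectors_linearIndependent_general
    {U T : Type*} [Fintype T]
    (ε : T → U → ℤ)
    (hrow : ∀ u : U, (∀ t, ε t u = 0) ∨
      ((∃! t, ε t u = 1) ∧ (∃! t, ε t u = -1) ∧ ∀ t, ε t u = 0 ∨ ε t u = 1 ∨ ε t u = -1))
    (hconn : ∀ t t' : T, Relation.ReflTransGen (fun a b => ∃ u, ε a u = 1 ∧ ε b u = -1) t t')
    (t₀ : T) :
    LinearIndependent ℤ (fun t : {t : T // t ≠ t₀} => ε t.1) := by
  refine linearIndependent_subtype_ne_of_forall_eq ε t₀ fun c hc t => ?_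
  refine ((hconn t₀ t).apply_eq ?_).symm
  rintro a b ⟨u, ha, hb⟩
  exact coeff_eq_of_sum_smul_eq_zero_of_eq_one_of_eq_neg_one (hrow u) hc ha hb

/-- Any `j-1` of the `j` imbalance vectors `ε_t` are linearly independent over `ℤ`,
given the row structure (each row is zero, or has a single `1` and a single `-1`)
and strong connectivity of the transition graph on `T`. -/
theorem imbalance_vectors_linearIndependent
    {V U T S : Type*} [Fintype V] [Fintype U] [Fintype T] [Fintype S]
    (j : ℕ) (hj : 2 ≤ j) (hT : Fintype.card T = j) (hS : Fintype.card S = j)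
    (W : T → Finset V) (W' : S → Finset V)
    (hW : ∀ v : V, ∃! t : T, v ∈ W t)
    (hW' : ∀ v : V, ∃! s : S, v ∈ W' s)
    (σ : T ≃ S) (f : U → V → ℕ)
    (ε : T → U → ℤ)
    (hε : ∀ t u, ε t u = (∑ w ∈ W t, (f u w : ℤ)) - ∑ w' ∈ W' (σ t), (f u w' : ℤ))
    (hrow : ∀ u : U, (∀ t, ε t u = 0) ∨
      ((∃! t, ε t u = 1) ∧ (∃! t, ε t u = -1) ∧ ∀ t, ε t u = 0 ∨ ε t u = 1 ∨ ε t u = -1))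
    (hpos : ∀ t, ∃ u, ε t u = 1) (hneg : ∀ t, ∃ u, ε t u = -1)
    (hconn : ∀ t t' : T, Relation.ReflTransGen (fun a b => ∃ u, ε a u = 1 ∧ ε b u = -1) t t')
    (t₀ : T) :
    LinearIndependent ℤ (fun t : {t : T // t ≠ t₀} => ε t.1) :=
  imbalance_vectors_linearIndependent_general ε hrow hconn t₀
end

section
/- Let V_n, V_{n+1} be finite sets and f : V_{n+1} × V_n → ℕ an incidence matrix. Let W = {W_t}_{t∈T}, W' = {W'_s}_{s∈S} be partitions of V_n with a map σ : T → 𝒫(S), and for each u ∈ V_{n+1} let m(u) ∈ V_n, M(u) ∈ V_n be designated elements (sources of minimal and maximal edges) with m(u) in some block W'_{s₀(u)} and M(u) in some block W_{t₁(u)}. Define modified entries f̃(u,w) = f(u,w) − [w = M(u)] and f̄(u,w) = f(u,w) − [w = m(u)]. Suppose a word w₁w₂⋯w_p over V_n enumerates the multiset {w with multiplicity f(u,w)}, with w₁ = m(u), w_p = M(u), and with the property that for each consecutive pair w_i w_{i+1}, if w_i ∈ W_t then w_{i+1} ∈ W'_s for some s ∈ σ(t). Then for each s ∈ S: Σ_{t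 : s ∈ σ(t)} (number of indices i < p with w_i ∈ W_t and w_{i+1} ∈ W'_s) = Σ_{w' ∈ W'_s} f̄(u,w'), and for each t ∈ T: Σ_{s ∈ σ(t)} (number of indices i < p with w_i ∈ W_t and w_{i+1} ∈ W'_s) = Σ_{w ∈ W_t} f̃(u,w). -/
/-!
The consecutive pairs of the word `w` project onto `w.tail` (second letters) and onto
`w.dropLast` (first letters). By the chain condition, a pair leaving `W_t` and entering
`W'_s` always has `s ∈ σ t`, so summing the pair counts over the admissible partner
blocks counts all pairs entering `W'_s` (resp. leaving `W_t`), that is, the letters of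
`w.tail` in `W'_s` (resp. of `w.dropLast` in `W_t`). Removing the first letter `m(u)`
(resp. the last letter `M(u)`) from the multiset of letters turns `f` into `f̄` (resp. `f̃`).
-/

namespace List

variable {α β : Type*}

theorem zip_dropLast_tail (l : List α) : l.dropLast.zip l.tail = l.zip l.tail := by
  rw [zip_eq_zip_take_min, zip_eq_zip_take_min (l₁ := l)]
  simp [dropLast_eq_take, take_take]

theorem map_fst_zip_tail (l : List α) : (l.zip l.tail).map Prod.fst = l.dropLast := by
  rw [← zip_dropLast_tail, map_fst_zip (by simp)]

theorem map_snd_zip_tail (l : List α) : (l.zip l.tail).map Prod.snd = l.tail :=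
  map_snd_zip (by simp)

theorem countP_zip_tail_fst (p : α → Prop) [DecidablePred p] (l : List α) :
    (l.zip l.tail).countP (fun x => p x.1) = l.dropLast.countP p := by
  conv_rhs => rw [← map_fst_zip_tail l]
  rw [countP_map]
  rfl

theorem countP_zip_tail_snd (p : α → Prop) [DecidablePred p] (l : List α) :
    (l.zip l.tail).countP (fun x => p x.2) = l.tail.countP p := by
  conv_rhs => rw [← map_snd_zip_tail l]
  rw [countP_map]
  rfl

theorem IsChain.rel_of_mem_zip_tail {R : α → α → Prop} {l : List α} (h : IsChain R l)
    {p : α × α} (hp : p ∈ l.zip l.tail) : R p.1 p.2 := by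
  rw [← zip_dropLast_tail] at hp
  exact (forall₂_iff_zip.mp (isChain_iff_forall₂.mp h)).2 hp

theorem count_dropLast [DecidableEq α] {l : List α} {b : α} (h : l.getLast? = some b)
    (a : α) : l.dropLast.count a = l.count a - if a = b then 1 else 0 := by
  obtain ⟨l, rfl⟩ := getLast?_eq_some_iff.mp h
  by_cases hab : a = b <;> simp [hab, Ne.symm]

theorem countP_eq_sum_countP_fiberwise [DecidableEq β] (F : Finset β) (g : α → β)
    (p : α → Prop) [DecidablePred p] {l : List α} (h : ∀ a ∈ l, p a → g a ∈ F) :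
    l.countP p = ∑ b ∈ F, l.countP (fun a => p a ∧ g a = b) := by
  induction l with
  | nil => simp
  | cons a l ih =>
    rw [countP_cons, ih fun x hx => h x (mem_cons_of_mem a hx)]
    simp only [countP_cons, Finset.sum_add_distrib, decide_eq_true_eq, add_right_inj]
    by_cases ha : p a
    · simp [ha, Finset.sum_ite_eq, h a mem_cons_self ha]
    · simp [ha]

theorem countP_mem_eq_sum_count [DecidableEq α] (F : Finset α) (l : List α) :
    l.countP (· ∈ F) = ∑ a ∈ F, l.count a := by
  rw [countP_eq_sum_countP_fiberwise F id (· ∈ F) fun _ _ h => h]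
  refine Finset.sum_congr rfl fun a ha => countP_congr fun x _ => ?_
  simp only [id, decide_eq_true_eq, beq_iff_eq]
  exact ⟨And.right, fun hx => ⟨hx ▸ ha, hx⟩⟩

end List

open List

theorem balance_relations_of_ordered_word_general
    {Vn Vn1 T S : Type*} [Fintype Vn] [DecidableEq Vn]
    [Fintype T] [DecidableEq T] [DecidableEq S]
    (f : Vn1 → Vn → ℕ)
    (τ : Vn → T) (ς : Vn → S) (σ : T → Finset S)
    (mE ME : Vn1 → Vn)
    (ftil fbar : Vn1 → Vn → ℕ)
    (hftil : ∀ u w, ftil u w = f u w - (if w = ME u then 1 else 0))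
    (hfbar : ∀ u w, fbar u w = f u w - (if w = mE u then 1 else 0))
    (u : Vn1) (w : List Vn)
    (hcount : ∀ v : Vn, w.count v = f u v)
    (hhead : w.head? = some (mE u)) (hlast : w.getLast? = some (ME u))
    (hchain : List.Chain' (fun a b => ς b ∈ σ (τ a)) w) :
    (∀ s : S, ∑ t ∈ Finset.univ.filter (fun t => s ∈ σ t),
        (w.zip w.tail).countP (fun p => decide (τ p.1 = t ∧ ς p.2 = s))
      = ∑ v ∈ Finset.univ.filter (fun v => ς v = s), fbar u v) ∧
    (∀ t : T, ∑ s ∈ σ t,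
        (w.zip w.tail).countP (fun p => decide (τ p.1 = t ∧ ς p.2 = s))
      = ∑ v ∈ Finset.univ.filter (fun v => τ v = t), ftil u v) := by
  have hstep {p : Vn × Vn} (hp : p ∈ w.zip w.tail) : ς p.2 ∈ σ (τ p.1) :=
    IsChain.rel_of_mem_zip_tail hchain hp
  refine ⟨fun s => ?_, fun t => ?_⟩
  · calc _ = (w.zip w.tail).countP (fun p => ς p.2 = s) := by
          rw [countP_eq_sum_countP_fiberwise (Finset.univ.filter (fun t => s ∈ σ t))
            (fun p => τ p.1) _ fun p hp hs => by simpa [← hs] using hstep hp]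
          simp only [and_comm]
      _ = ∑ v ∈ Finset.univ.filter (fun v => ς v = s), w.tail.count v := by
          rw [countP_zip_tail_snd (ς · = s), ← countP_mem_eq_sum_count]
          simp
      _ = _ := Finset.sum_congr rfl fun v _ => by
          rw [count_tail, hhead, hcount, hfbar]
          simp [@eq_comm _ (mE u)]
  · calc _ = (w.zip w.tail).countP (fun p => τ p.1 = t) :=
          (countP_eq_sum_countP_fiberwise (σ t) (fun p => ς p.2) _
            fun p hp ht => ht ▸ hstep hp).symm
      _ = ∑ v ∈ Finset.univ.filter (fun v => τ v = t), w.dropLast.count v := by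
          rw [countP_zip_tail_fst (τ · = t), ← countP_mem_eq_sum_count]
          simp
      _ = _ := Finset.sum_congr rfl fun v _ => by
          rw [count_dropLast hlast, hcount, hftil]

/-- Necessity of the balance relations: if a word `w` over `V_n` enumerates the edges
into `u` (with multiplicities `f u ·`), starts at the minimal source `mE u`, ends at the
maximal source `ME u`, and every transition from a block `W_t` lands in a block `W'_s`
with `s ∈ σ t`, then counting transitions yields the balance relations among the
modified incidence entries. -/
theorem balance_relations_of_ordered_word
    {Vn Vn1 T S : Type*} [Fintype Vn] [DecidableEq Vn]
    [Fintype T] [DecidableEq T] [Fintype S] [DecidableEq S]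
    (f : Vn1 → Vn → ℕ)
    (τ : Vn → T) (ς : Vn → S) (σ : T → Finset S)
    (mE ME : Vn1 → Vn)
    (ftil fbar : Vn1 → Vn → ℕ)
    (hftil : ∀ u w, ftil u w = f u w - (if w = ME u then 1 else 0))
    (hfbar : ∀ u w, fbar u w = f u w - (if w = mE u then 1 else 0))
    (u : Vn1) (w : List Vn)
    (hcount : ∀ v : Vn, w.count v = f u v)
    (hhead : w.head? = some (mE u)) (hlast : w.getLast? = some (ME u))
    (hchain : List.Chain' (fun a b => ς b ∈ σ (τ a)) w) :
    (∀ s : S, ∑ t ∈ Finset.univ.filter (fun t => s ∈ σ t),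
        (w.zip w.tail).countP (fun p => decide (τ p.1 = t ∧ ς p.2 = s))
      = ∑ v ∈ Finset.univ.filter (fun v => ς v = s), fbar u v) ∧
    (∀ t : T, ∑ s ∈ σ t,
        (w.zip w.tail).countP (fun p => decide (τ p.1 = t ∧ ς p.2 = s))
      = ∑ v ∈ Finset.univ.filter (fun v => τ v = t), ftil u v) :=
  balance_relations_of_ordered_word_general f τ ς σ mE ME ftil fbar hftil hfbar u w hcount hhead
    hlast hchain
end
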